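/- arXiv:math/0305428 — 4 statements merged into one kernel-verified Lean document; each statement's English description precedes it below -/
import Mathlib

section
/- Suppose a, b : ℤ → End(V) are fields. Then for every n ∈ ℤ and every v ∈ V, both sums occurring in the definition of :ab:ₙ v (namely Σ_{j < h, m ∈ ℤ} l(j,m,n) • aⱼ(bₘ v) and Σ_{j ≥ h, m ∈ ℤ} l(j,m,n) • bₘ(aⱼ v)) have only finitely many nonzero terms, and the resulting family n ↦ :ab:ₙ is again a field: for every v ∈ V there exists n₀ ∈ ℤ such that :ab:ₙ v = 0 for all n ≥ n₀. -/
/-- A family `a : ℤ → End V` is a *field* if for every `v` there is `n₀`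
with `aₙ v = 0` for all `n ≥ n₀`. -/
def IsKNField {V : Type*} [AddCommGroup V] [Module ℂ V]
    (a : ℤ → Module.End ℂ V) : Prop :=
  ∀ v : V, ∃ n₀ : ℤ, ∀ n ≥ n₀, a n v = 0

/-- The `n`-th coefficient of the normal ordered product `:ab:` of two
families of endomorphisms, applied to a vector `v`:
`:ab:ₙ v = Σ_{j<h,m} l(j,m,n) • aⱼ(bₘ v) + Σ_{j≥h,m} l(j,m,n) • bₘ(aⱼ v)`. -/
noncomputable def nop {V : Type*} [AddCommGroup V] [Module ℂ V]
    (h : ℤ) (l : ℤ × ℤ × ℤ → ℂ) (a b : ℤ → Module.End ℂ V)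
    (n : ℤ) (v : V) : V :=
  (∑ᶠ p : ℤ × ℤ, if p.1 < h then l (p.1, p.2, n) • a p.1 (b p.2 v) else 0)
  + (∑ᶠ p : ℤ × ℤ, if h ≤ p.1 then l (p.1, p.2, n) • b p.2 (a p.1 v) else 0)

/-- If `a` and `b` are fields then both sums defining `:ab:ₙ v` have only
finitely many nonzero terms, and `n ↦ :ab:ₙ` is again a field. -/
theorem nop_support_finite_and_isField
    {V : Type*} [AddCommGroup V] [Module ℂ V]
    (h : ℤ) (l : ℤ × ℤ × ℤ → ℂ)
    (hl : ∀ j m n : ℤ, l (j, m, n) ≠ 0 → n - j - h ≤ m ∧ m ≤ n - j + h)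
    (a b : ℤ → Module.End ℂ V)
    (ha : IsKNField a) (hb : IsKNField b) :
    (∀ (n : ℤ) (v : V),
      {p : ℤ × ℤ | p.1 < h ∧ l (p.1, p.2, n) • a p.1 (b p.2 v) ≠ 0}.Finite ∧
      {p : ℤ × ℤ | h ≤ p.1 ∧ l (p.1, p.2, n) • b p.2 (a p.1 v) ≠ 0}.Finite) ∧
    (∀ v : V, ∃ n₀ : ℤ, ∀ n ≥ n₀, nop h l a b n v = 0) := by
  classical
  constructor
  · intro n v
    obtain ⟨m₀, hm₀⟩ := hb v
    obtain ⟨j₀, hj₀⟩ := ha v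
    constructor
    · apply Set.Finite.subset
        ((Finset.Icc (n - h - m₀ + 1) (h - 1) ×ˢ
          Finset.Icc (n - 2 * h + 1) (m₀ - 1)).finite_toSet)
      rintro ⟨j, m⟩ ⟨hjh, hne⟩
      have hlne : l (j, m, n) ≠ 0 := by intro h0; apply hne; simp [h0]
      obtain ⟨h1, h2⟩ := hl j m n hlne
      have hbm : b m v ≠ 0 := by intro h0; apply hne; simp [h0]
      have hmlt : m < m₀ := by
        by_contra hc; push_neg at hc; exact hbm (hm₀ m hc)
      simp only [Finset.coe_product, Set.mem_prod, Finset.mem_coe, Finset.mem_Icc]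
      omega
    · apply Set.Finite.subset
        ((Finset.Icc h (j₀ - 1) ×ˢ
          Finset.Icc (n - j₀ + 1 - h) n).finite_toSet)
      rintro ⟨j, m⟩ ⟨hjh, hne⟩
      have hlne : l (j, m, n) ≠ 0 := by intro h0; apply hne; simp [h0]
      obtain ⟨h1, h2⟩ := hl j m n hlne
      have haj : a j v ≠ 0 := by intro h0; apply hne; simp [h0]
      have hjlt : j < j₀ := by
        by_contra hc; push_neg at hc; exact haj (hj₀ j hc)
      simp only [Finset.coe_product, Set.mem_prod, Finset.mem_coe, Finset.mem_Icc]
      omega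
  · intro v
    obtain ⟨m₀, hm₀⟩ := hb v
    obtain ⟨j₀, hj₀⟩ := ha v
    set f : ℤ → ℤ := fun j => Classical.choose (hb (a j v)) with hfdef
    have hf : ∀ j m, f j ≤ m → b m (a j v) = 0 := fun j m hm =>
      Classical.choose_spec (hb (a j v)) m hm
    set M : ℕ := (Finset.Icc h (j₀ - 1)).sup fun j => (f j).toNat with hM
    refine ⟨max (m₀ + 2 * h - 1) ((M : ℤ) + j₀ + h - 1), fun n hn => ?_⟩
    have hn1 : m₀ + 2 * h - 1 ≤ n := le_trans (le_max_left _ _) hn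
    have hn2 : (M : ℤ) + j₀ + h - 1 ≤ n := le_trans (le_max_right _ _) hn
    have e1 : ∀ p : ℤ × ℤ,
        (if p.1 < h then l (p.1, p.2, n) • a p.1 (b p.2 v) else 0) = 0 := by
      rintro ⟨j, m⟩
      by_cases hj : j < h
      · simp only [if_pos hj]
        by_cases hlz : l (j, m, n) = 0
        · simp [hlz]
        · obtain ⟨h1, h2⟩ := hl j m n hlz
          have hbz : b m v = 0 := hm₀ m (by omega)
          simp [hbz]
      · simp [hj]
    have e2 : ∀ p : ℤ × ℤ,
        (if h ≤ p.1 then l (p.1, p.2, n) • b p.2 (a p.1 v) else 0) = 0 := by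
      rintro ⟨j, m⟩
      by_cases hj : h ≤ j
      · simp only [if_pos hj]
        by_cases hlz : l (j, m, n) = 0
        · simp [hlz]
        · by_cases hja : a j v = 0
          · simp [hja]
          · have hjlt : j < j₀ := by
              by_contra hc; push_neg at hc; exact hja (hj₀ j hc)
            have hjmem : j ∈ Finset.Icc h (j₀ - 1) :=
              Finset.mem_Icc.mpr ⟨hj, by omega⟩
            have hfM : (f j).toNat ≤ M := Finset.le_sup (f := fun j => (f j).toNat) hjmem
            have hfj : f j ≤ ((f j).toNat : ℤ) := Int.self_le_toNat _
            obtain ⟨h1, h2⟩ := hl j m n hlz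
            have hfm : f j ≤ m := by omega
            rw [hf j m hfm, smul_zero]
      · simp [hj]
    unfold nop
    rw [finsum_congr e1, finsum_congr e2, finsum_zero, add_zero]
end

section
/- Let v₀ ∈ V and s ∈ ℤ, and suppose aⱼ v₀ = 0 for every j ≥ h and bₘ v₀ = 0 for every m > −s. Then for every integer n > −s + 2h − 1, every term of both sums defining :ab:ₙ v₀ vanishes, so that :ab:ₙ v₀ = 0. -/
/-- Vacuum vanishing: if `aⱼ v₀ = 0` for `j ≥ h` and `bₘ v₀ = 0` for `m > −s`,
then for `n > −s + 2h − 1` every term of both sums defining `:ab:ₙ v₀`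
vanishes, and hence `:ab:ₙ v₀ = 0`. -/
theorem nop_vacuum_vanishing
    {V : Type*} [AddCommGroup V] [Module ℂ V]
    (h : ℤ) (l : ℤ × ℤ × ℤ → ℂ)
    (hl : ∀ j m n : ℤ, l (j, m, n) ≠ 0 → n - j - h ≤ m ∧ m ≤ n - j + h)
    (a b : ℤ → Module.End ℂ V) (v₀ : V) (s : ℤ)
    (ha : ∀ j ≥ h, a j v₀ = 0)
    (hb : ∀ m > -s, b m v₀ = 0) :
    ∀ n > -s + 2 * h - 1,
      (∀ j m : ℤ, j < h → l (j, m, n) • a j (b m v₀) = 0) ∧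
      (∀ j m : ℤ, h ≤ j → l (j, m, n) • b m (a j v₀) = 0) ∧
      nop h l a b n v₀ = 0 := by
  intro n hn
  have h1 : ∀ j m : ℤ, j < h → l (j, m, n) • a j (b m v₀) = 0 := by
    intro j m hj
    by_cases hz : l (j, m, n) = 0
    · simp [hz]
    · have hm : m > -s := by
        have := (hl j m n hz).1
        omega
      rw [hb m hm]
      simp
  have h2 : ∀ j m : ℤ, h ≤ j → l (j, m, n) • b m (a j v₀) = 0 := by
    intro j m hj
    rw [ha j hj]
    simp
  refine ⟨h1, h2, ?_⟩
  unfold nop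
  have e1 : (∑ᶠ p : ℤ × ℤ, if p.1 < h then l (p.1, p.2, n) • a p.1 (b p.2 v₀) else 0) = 0 := by
    have : ∀ p : ℤ × ℤ, (if p.1 < h then l (p.1, p.2, n) • a p.1 (b p.2 v₀) else 0) = 0 := by
      intro p
      split
      · exact h1 p.1 p.2 ‹_›
      · rfl
    simp only [this, finsum_zero]
  have e2 : (∑ᶠ p : ℤ × ℤ, if h ≤ p.1 then l (p.1, p.2, n) • b p.2 (a p.1 v₀) else 0) = 0 := by
    have : ∀ p : ℤ × ℤ, (if h ≤ p.1 then l (p.1, p.2, n) • b p.2 (a p.1 v₀) else 0) = 0 := by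
      intro p
      split
      · exact h2 p.1 p.2 ‹_›
      · rfl
    simp only [this, finsum_zero]
  rw [e1, e2, add_zero]
end

section
/- Let v₀ ∈ V and s ∈ ℤ, and suppose aⱼ v₀ = 0 for every j ≥ h and bₘ v₀ = 0 for every m > −s. Then at the boundary index n = −s + 2h − 1 exactly one term of the defining sums can be nonzero, and :ab:_{−s+2h−1} v₀ = l(h−1, −s, −s+2h−1) • a_{h−1}(b_{−s} v₀). -/
/-- Vacuum evaluation at the boundary index: if `aⱼ v₀ = 0` for `j ≥ h` and
`bₘ v₀ = 0` for `m > −s`, then at `n = −s + 2h − 1` exactly one term of the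
defining sums can be nonzero, and
`:ab:_{−s+2h−1} v₀ = l(h−1,−s,−s+2h−1) • a_{h−1}(b_{−s} v₀)`. -/
theorem nop_vacuum_boundary
    {V : Type*} [AddCommGroup V] [Module ℂ V]
    (h : ℤ) (l : ℤ × ℤ × ℤ → ℂ)
    (hl : ∀ j m n : ℤ, l (j, m, n) ≠ 0 → n - j - h ≤ m ∧ m ≤ n - j + h)
    (a b : ℤ → Module.End ℂ V) (v₀ : V) (s : ℤ)
    (ha : ∀ j ≥ h, a j v₀ = 0)
    (hb : ∀ m > -s, b m v₀ = 0) :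
    (∀ j m : ℤ, j < h → (j, m) ≠ (h - 1, -s) →
        l (j, m, -s + 2 * h - 1) • a j (b m v₀) = 0) ∧
    (∀ j m : ℤ, h ≤ j → l (j, m, -s + 2 * h - 1) • b m (a j v₀) = 0) ∧
    nop h l a b (-s + 2 * h - 1) v₀
      = l (h - 1, -s, -s + 2 * h - 1) • a (h - 1) (b (-s) v₀) := by

  have key1 : ∀ j m : ℤ, j < h → (j, m) ≠ (h - 1, -s) →
      l (j, m, -s + 2 * h - 1) • a j (b m v₀) = 0 := by
    intro j m hj hne
    by_cases hl0 : l (j, m, -s + 2 * h - 1) = 0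
    · simp [hl0]
    · obtain ⟨h1, h2⟩ := hl j m _ hl0
      by_cases hm : m > -s
      · rw [hb m hm]; simp
      · push_neg at hm
        have hj' : j = h - 1 := by omega
        have hm' : m = -s := by omega
        exact absurd (by rw [hj', hm']) hne
  have key2 : ∀ j m : ℤ, h ≤ j → l (j, m, -s + 2 * h - 1) • b m (a j v₀) = 0 := by
    intro j m hj
    rw [ha j hj]; simp
  refine ⟨key1, key2, ?_⟩
  unfold nop
  have e2 : (∑ᶠ p : ℤ × ℤ, if h ≤ p.1 then
      l (p.1, p.2, -s + 2 * h - 1) • b p.2 (a p.1 v₀) else 0) = 0 := by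
    have : ∀ p : ℤ × ℤ, (if h ≤ p.1 then
        l (p.1, p.2, -s + 2 * h - 1) • b p.2 (a p.1 v₀) else 0) = 0 := by
      intro p
      split
      · exact key2 p.1 p.2 ‹_›
      · rfl
    simp only [this, finsum_zero]
  rw [e2, add_zero]
  rw [finsum_eq_single _ ((h - 1, -s) : ℤ × ℤ)]
  · simp
  · intro p hp
    by_cases hj : p.1 < h
    · simp only [if_pos hj]
      exact key1 p.1 p.2 hj (by simpa [Prod.ext_iff] using hp)
    · simp [hj]
end

section
/- Let T ∈ End(V) and let a, b : ℤ → End(V) be fields. Define a′ⱼ = T∘aⱼ − aⱼ∘T and b′ₘ = T∘bₘ − bₘ∘T. Then a′ and b′ are again fields, and for every n ∈ ℤ and every v ∈ V the commutator with T acts as a derivation of the normal ordered product: T(:ab:ₙ v) − :ab:ₙ(T v) = :a′b:ₙ v + :ab′:ₙ v. -/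
/-- A function on `ℤ × ℤ` whose support is contained in a rectangle has
finite support. -/
lemma fin_rect {V : Type*} [AddCommGroup V] (f : ℤ × ℤ → V) (A B C D : ℤ)
    (H : ∀ p : ℤ × ℤ, f p ≠ 0 → A ≤ p.1 ∧ p.1 ≤ B ∧ C ≤ p.2 ∧ p.2 ≤ D) :
    (Function.support f).Finite := by
  apply Set.Finite.subset ((Set.finite_Icc A B).prod (Set.finite_Icc C D))
  intro p hp
  obtain ⟨h1, h2, h3, h4⟩ := H p hp
  exact ⟨Set.mem_Icc.2 ⟨h1, h2⟩, Set.mem_Icc.2 ⟨h3, h4⟩⟩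

/-- Finiteness of the support of the first kind of summand in `nop`. -/
lemma finType1 {V : Type*} [AddCommGroup V] [Module ℂ V] (h n M : ℤ)
    (l : ℤ × ℤ × ℤ → ℂ)
    (hl : ∀ j m : ℤ, l (j, m, n) ≠ 0 → n - j - h ≤ m ∧ m ≤ n - j + h)
    (F : ℤ × ℤ → V) (hF : ∀ p : ℤ × ℤ, M ≤ p.2 → F p = 0) :
    (Function.support fun p : ℤ × ℤ =>
      if p.1 < h then l (p.1, p.2, n) • F p else 0).Finite := by
  apply fin_rect _ (n - h - M + 1) (h - 1) (n - 2*h + 1) (M - 1)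
  intro p hp
  by_cases h1 : p.1 < h
  · rw [if_pos h1] at hp
    have hlne : l (p.1, p.2, n) ≠ 0 := fun hz => hp (by rw [hz, zero_smul])
    have hFne : F p ≠ 0 := fun hz => hp (by rw [hz, smul_zero])
    have h2 := hl p.1 p.2 hlne
    have h3 : p.2 < M := lt_of_not_ge (fun hM => hFne (hF p hM))
    omega
  · exact absurd (if_neg h1) hp

/-- Finiteness of the support of the second kind of summand in `nop`. -/
lemma finType2 {V : Type*} [AddCommGroup V] [Module ℂ V] (h n M : ℤ)
    (l : ℤ × ℤ × ℤ → ℂ)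
    (hl : ∀ j m : ℤ, l (j, m, n) ≠ 0 → n - j - h ≤ m ∧ m ≤ n - j + h)
    (F : ℤ × ℤ → V) (hF : ∀ p : ℤ × ℤ, M ≤ p.1 → F p = 0) :
    (Function.support fun p : ℤ × ℤ =>
      if h ≤ p.1 then l (p.1, p.2, n) • F p else 0).Finite := by
  apply fin_rect _ h (M - 1) (n - M - h + 1) n
  intro p hp
  by_cases h1 : h ≤ p.1
  · rw [if_pos h1] at hp
    have hlne : l (p.1, p.2, n) ≠ 0 := fun hz => hp (by rw [hz, zero_smul])
    have hFne : F p ≠ 0 := fun hz => hp (by rw [hz, smul_zero])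
    have h2 := hl p.1 p.2 hlne
    have h3 : p.1 < M := lt_of_not_ge (fun hM => hFne (hF p hM))
    omega
  · exact absurd (if_neg h1) hp

/-- The commutator with `T` acts as a derivation of the normal ordered
product: with `a′ⱼ = T∘aⱼ − aⱼ∘T` and `b′ₘ = T∘bₘ − bₘ∘T`, which are again
fields, one has `T(:ab:ₙ v) − :ab:ₙ(T v) = :a′b:ₙ v + :ab′:ₙ v`. -/
theorem commutator_derivation_of_nop
    {V : Type*} [AddCommGroup V] [Module ℂ V]
    (h : ℤ) (l : ℤ × ℤ × ℤ → ℂ)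
    (hl : ∀ j m n : ℤ, l (j, m, n) ≠ 0 → n - j - h ≤ m ∧ m ≤ n - j + h)
    (T : Module.End ℂ V) (a b : ℤ → Module.End ℂ V)
    (ha : IsKNField a) (hb : IsKNField b) :
    IsKNField (fun j => T * a j - a j * T) ∧
    IsKNField (fun m => T * b m - b m * T) ∧
    (∀ (n : ℤ) (v : V),
      T (nop h l a b n v) - nop h l a b n (T v)
        = nop h l (fun j => T * a j - a j * T) b n v
          + nop h l a (fun m => T * b m - b m * T) n v) := by
  have hfield : ∀ (c : ℤ → Module.End ℂ V), IsKNField c →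
      IsKNField (fun j => T * c j - c j * T) := by
    intro c hc v
    obtain ⟨n₀, h₀⟩ := hc v
    obtain ⟨n₁, h₁⟩ := hc (T v)
    refine ⟨max n₀ n₁, fun n hn => ?_⟩
    simp [LinearMap.sub_apply, Module.End.mul_apply,
      h₀ n (le_trans (le_max_left _ _) hn), h₁ n (le_trans (le_max_right _ _) hn)]
  refine ⟨hfield a ha, hfield b hb, ?_⟩
  intro n v
  obtain ⟨m₀, hm₀⟩ := hb v
  obtain ⟨m₁, hm₁⟩ := hb (T v)
  obtain ⟨j₀, hj₀⟩ := ha v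
  obtain ⟨j₁, hj₁⟩ := ha (T v)
  have hl' : ∀ j m : ℤ, l (j, m, n) ≠ 0 → n - j - h ≤ m ∧ m ≤ n - j + h :=
    fun j m => hl j m n
  -- the eight functions appearing as summands
  set F1 : ℤ × ℤ → V := fun p => if p.1 < h then l (p.1, p.2, n) • a p.1 (b p.2 v) else 0 with hF1
  set F2 : ℤ × ℤ → V := fun p => if h ≤ p.1 then l (p.1, p.2, n) • b p.2 (a p.1 v) else 0 with hF2
  set G1 : ℤ × ℤ → V := fun p => if p.1 < h then l (p.1, p.2, n) • a p.1 (b p.2 (T v)) else 0 with hG1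
  set G2 : ℤ × ℤ → V := fun p => if h ≤ p.1 then l (p.1, p.2, n) • b p.2 (a p.1 (T v)) else 0 with hG2
  set A1 : ℤ × ℤ → V := fun p => if p.1 < h then l (p.1, p.2, n) • (T * a p.1 - a p.1 * T) (b p.2 v) else 0 with hA1
  set A2 : ℤ × ℤ → V := fun p => if h ≤ p.1 then l (p.1, p.2, n) • b p.2 ((T * a p.1 - a p.1 * T) v) else 0 with hA2
  set B1 : ℤ × ℤ → V := fun p => if p.1 < h then l (p.1, p.2, n) • a p.1 ((T * b p.2 - b p.2 * T) v) else 0 with hB1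
  set B2 : ℤ × ℤ → V := fun p => if h ≤ p.1 then l (p.1, p.2, n) • (T * b p.2 - b p.2 * T) (a p.1 v) else 0 with hB2
  -- finiteness of all supports
  have finF1 : (Function.support F1).Finite :=
    finType1 h n m₀ l hl' _ (fun p hp => by rw [hm₀ p.2 hp, map_zero])
  have finF2 : (Function.support F2).Finite :=
    finType2 h n j₀ l hl' _ (fun p hp => by rw [hj₀ p.1 hp, map_zero])
  have finG1 : (Function.support G1).Finite :=
    finType1 h n m₁ l hl' _ (fun p hp => by rw [hm₁ p.2 hp, map_zero])
  have finG2 : (Function.support G2).Finite :=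
    finType2 h n j₁ l hl' _ (fun p hp => by rw [hj₁ p.1 hp, map_zero])
  have finA1 : (Function.support A1).Finite :=
    finType1 h n m₀ l hl' _ (fun p hp => by rw [hm₀ p.2 hp, map_zero])
  have finA2 : (Function.support A2).Finite := by
    apply finType2 h n (max j₀ j₁) l hl'
    intro p hp
    simp [LinearMap.sub_apply, Module.End.mul_apply,
      hj₀ p.1 (le_trans (le_max_left _ _) hp), hj₁ p.1 (le_trans (le_max_right _ _) hp)]
  have finB1 : (Function.support B1).Finite := by
    apply finType1 h n (max m₀ m₁) l hl'
    intro p hp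
    simp [LinearMap.sub_apply, Module.End.mul_apply,
      hm₀ p.2 (le_trans (le_max_left _ _) hp), hm₁ p.2 (le_trans (le_max_right _ _) hp)]
  have finB2 : (Function.support B2).Finite :=
    finType2 h n j₀ l hl' _ (fun p hp => by rw [hj₀ p.1 hp, map_zero])
  have finTF1 : (Function.support fun p => T (F1 p)).Finite :=
    finF1.subset (Function.support_comp_subset (map_zero T) F1)
  have finTF2 : (Function.support fun p => T (F2 p)).Finite :=
    finF2.subset (Function.support_comp_subset (map_zero T) F2)
  -- pointwise derivation identities
  have e1 : ∀ p : ℤ × ℤ, T (F1 p) - G1 p = A1 p + B1 p := by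
    intro p
    by_cases h1 : p.1 < h
    · simp only [hF1, hG1, hA1, hB1, if_pos h1, map_smul, LinearMap.sub_apply,
        Module.End.mul_apply, smul_sub, map_sub]
      abel
    · simp [hF1, hG1, hA1, hB1, if_neg h1]
  have e2 : ∀ p : ℤ × ℤ, T (F2 p) - G2 p = A2 p + B2 p := by
    intro p
    by_cases h1 : h ≤ p.1
    · simp only [hF2, hG2, hA2, hB2, if_pos h1, map_smul, LinearMap.sub_apply,
        Module.End.mul_apply, smul_sub, map_sub]
      abel
    · simp [hF2, hG2, hA2, hB2, if_neg h1]
  have hT1 : T (∑ᶠ p, F1 p) = ∑ᶠ p, T (F1 p) := by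
    have := T.toAddMonoidHom.map_finsum finF1
    simpa using this
  have hT2 : T (∑ᶠ p, F2 p) = ∑ᶠ p, T (F2 p) := by
    have := T.toAddMonoidHom.map_finsum finF2
    simpa using this
  have key1 : T (∑ᶠ p, F1 p) - ∑ᶠ p, G1 p = (∑ᶠ p, A1 p) + ∑ᶠ p, B1 p := by
    rw [hT1, ← finsum_sub_distrib finTF1 finG1,
      finsum_congr e1, finsum_add_distrib finA1 finB1]
  have key2 : T (∑ᶠ p, F2 p) - ∑ᶠ p, G2 p = (∑ᶠ p, A2 p) + ∑ᶠ p, B2 p := by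
    rw [hT2, ← finsum_sub_distrib finTF2 finG2,
      finsum_congr e2, finsum_add_distrib finA2 finB2]
  show T ((∑ᶠ p, F1 p) + ∑ᶠ p, F2 p) - ((∑ᶠ p, G1 p) + ∑ᶠ p, G2 p)
      = ((∑ᶠ p, A1 p) + ∑ᶠ p, A2 p) + ((∑ᶠ p, B1 p) + ∑ᶠ p, B2 p)
  rw [map_add, ← sub_add_sub_comm, key1, key2]
  abel
end
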